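/- For even p = 2m, the sum over all permutations σ of {1,...,p} of the crossing parity (-1)^{σζ₀} equals 2^m · m!, i.e., ∑_{σ∈S_p} (-1)^σ ∏_{j=1}^{m} sign(σ(2j) - σ(2j-1)) = 2^m · m!. -/

import Mathlib

/-!
Let `ζ₀` be the standard matching, viewed as the involution of `Fin (2m)` swapping `2j` and
`2j + 1`. If σ does not place the values `v` and `ζ₀ v` in a common position pair, then
left-multiplying σ by `swap v (ζ₀ v)` negates its sign but, the two values being adjacent, changes
no comparison inside a position pair; so it negates the crossing parity. Taking for `v` the least
value at which `σ ζ₀ σ⁻¹` and `ζ₀` differ makes this a sign-reversing involution, so only the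
centralizer of `ζ₀` contributes. That centralizer is the hyperoctahedral group, of order `2^m m!`,
and on it every flipped pair contributes `-1` both to the sign and to the product.
-/

open Finset Equiv Equiv.Perm
open scoped Nat

theorem Equiv.swap_apply_lt_swap_apply_iff {α : Type*} [LinearOrder α] {a b c d : α}
    (hcd : c ⋖ d) (hc : ¬(a = c ∧ b = d)) (hd : ¬(a = d ∧ b = c)) :
    swap c d a < swap c d b ↔ a < b := by
  have hlt := hcd.lt
  have hgap : ∀ x, c < x → ¬x < d := fun _ hx => hcd.2 hx
  rw [swap_apply_def, swap_apply_def]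
  split_ifs <;> subst_vars <;> grind

namespace Equiv.Perm

section

variable {α : Type*} [Fintype α] [DecidableEq α] (ζ : Perm α)

def mismatches (σ : Perm α) : Finset α := {v | (σ * ζ * σ⁻¹) v ≠ ζ v}

variable {ζ}

theorem mismatches_eq_empty_iff {σ : Perm α} : mismatches ζ σ = ∅ ↔ σ * ζ = ζ * σ := by
  rw [← mul_inv_eq_iff_eq_mul, Perm.ext_iff, mismatches, filter_eq_empty_iff]
  simp

theorem mem_mismatches_mul_iff {σ t : Perm α} (ht : t * ζ = ζ * t) {v : α} :
    v ∈ mismatches ζ (t * σ) ↔ t⁻¹ v ∈ mismatches ζ σ := by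
  have hconj : t * σ * ζ * (t * σ)⁻¹ = t * (σ * ζ * σ⁻¹) * t⁻¹ := by group
  have hv : ζ v = t (ζ (t⁻¹ v)) := by
    rw [← Perm.mul_apply, ht]; simp
  simp only [mismatches, mem_filter, mem_univ, true_and]
  rw [hconj, Perm.mul_apply, Perm.mul_apply, hv, t.injective.ne_iff]

theorem apply_mem_mismatches (hζ : Function.Involutive ζ) {σ : Perm α} {v : α}
    (hv : v ∈ mismatches ζ σ) : ζ v ∈ mismatches ζ σ := by
  have hM : Function.Involutive (σ * ζ * σ⁻¹) := fun x => by simp [hζ _]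
  simp only [mismatches, mem_filter, mem_univ, true_and, hζ v] at hv ⊢
  intro h
  exact hv (by nth_rw 1 [← h]; exact hM _)

theorem mismatches_swap_mul (hζ : Function.Involutive ζ) {σ : Perm α} {v : α}
    (hv : v ∈ mismatches ζ σ) : mismatches ζ (swap v (ζ v) * σ) = mismatches ζ σ := by
  have hcomm : swap v (ζ v) * ζ = ζ * swap v (ζ v) := by
    rw [← eq_mul_inv_iff_mul_eq, ← swap_apply_apply, hζ v, swap_comm]
  ext u
  rw [mem_mismatches_mul_iff hcomm, swap_inv]
  by_cases hu : u = v ∨ u = ζ v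
  · rcases hu with rfl | rfl <;> simp [hv, apply_mem_mismatches hζ hv]
  · push Not at hu
    rw [swap_apply_of_ne_of_ne hu.1 hu.2]

end

theorem sum_eq_sum_filter_commute_of_swap_mul {α : Type*} [Fintype α] [LinearOrder α]
    {ζ : Perm α} (hζ : Function.Involutive ζ) (f : Perm α → ℤ)
    (hf : ∀ σ v, v ∈ mismatches ζ σ → f (swap v (ζ v) * σ) = -f σ) :
    ∑ σ, f σ = ∑ σ with σ * ζ = ζ * σ, f σ := by
  rw [← sum_filter_add_sum_filter_not univ (fun σ => σ * ζ = ζ * σ), add_eq_left]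
  have hne : ∀ σ ∈ ({σ | ¬σ * ζ = ζ * σ} : Finset (Perm α)), (mismatches ζ σ).Nonempty :=
    fun σ hσ => nonempty_iff_ne_empty.2 <| mismatches_eq_empty_iff.not.2 (mem_filter.1 hσ).2
  let p σ hσ : α := (mismatches ζ σ).min' (hne σ hσ)
  have hp : ∀ σ hσ, p σ hσ ∈ mismatches ζ σ := fun σ hσ => min'_mem _ _
  refine sum_involution (fun σ hσ => swap (p σ hσ) (ζ (p σ hσ)) * σ) (fun σ hσ => ?_)
    (fun σ hσ hσ0 h => ?_) (fun σ hσ => ?_) (fun σ hσ => ?_)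
  · rw [hf σ _ (hp σ hσ), add_neg_cancel]
  · exact hσ0 (by linarith [h ▸ hf σ _ (hp σ hσ)])
  · simp only [mem_filter, mem_univ, true_and]
    rw [← mismatches_eq_empty_iff, mismatches_swap_mul hζ (hp σ hσ), mismatches_eq_empty_iff]
    exact (mem_filter.1 hσ).2
  · simp only [p, mismatches_swap_mul hζ (hp σ hσ), swap_mul_self_mul]

end Equiv.Perm

namespace CrossingParity

variable {m : ℕ}

def pairEquiv (m : ℕ) : Fin m × Fin 2 ≃ Fin (2 * m) :=
  finProdFinEquiv.trans (finCongr (Nat.mul_comm m 2))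

@[simp] theorem pairEquiv_apply_val (x : Fin m × Fin 2) :
    (pairEquiv m x : ℕ) = 2 * x.1 + x.2 := by
  simp [pairEquiv]; ring

theorem pairEquiv_lt_pairEquiv_iff {j : Fin m} {b b' : Fin 2} :
    pairEquiv m (j, b) < pairEquiv m (j, b') ↔ b < b' := by
  rw [Fin.lt_def, Fin.lt_def]; simp

def stdMatching (m : ℕ) : Perm (Fin (2 * m)) :=
  (pairEquiv m).permCongr (prodCongrRight fun _ => swap 0 1)

@[simp] theorem stdMatching_pairEquiv (x : Fin m × Fin 2) :
    stdMatching m (pairEquiv m x) = pairEquiv m (x.1, swap 0 1 x.2) := by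
  simp [stdMatching, permCongr_apply]; rfl

theorem stdMatching_involutive : Function.Involutive (stdMatching m) := by
  intro v
  obtain ⟨x, rfl⟩ := (pairEquiv m).surjective v
  simp

theorem covBy_stdMatching_or_covBy (v : Fin (2 * m)) :
    v ⋖ stdMatching m v ∨ stdMatching m v ⋖ v := by
  obtain ⟨⟨j, b⟩, rfl⟩ := (pairEquiv m).surjective v
  fin_cases b <;> simp

theorem stdMatching_apply_ne (v : Fin (2 * m)) : stdMatching m v ≠ v :=
  (covBy_stdMatching_or_covBy v).elim (·.lt.ne') (·.lt.ne)

theorem cycleType_stdMatching : (stdMatching m).cycleType = Multiset.replicate m 2 := by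
  have hsq : stdMatching m ^ 2 = 1 := by
    ext v : 1
    simp [sq, stdMatching_involutive v]
  have hsupp : (stdMatching m).support = univ :=
    eq_univ_of_forall fun v => mem_support.2 (stdMatching_apply_ne v)
  have hsum := sum_cycleType (stdMatching m)
  rw [cycleType_of_pow_prime_eq_one hsq] at hsum ⊢
  rw [Multiset.sum_replicate, hsupp, card_univ, Fintype.card_fin, smul_eq_mul] at hsum
  rw [show (stdMatching m).cycleType.card = m by omega]

theorem card_commute_stdMatching :
    #{σ : Perm (Fin (2 * m)) | σ * stdMatching m = stdMatching m * σ} = 2 ^ m * m ! := by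
  have h := nat_card_centralizer (stdMatching m)
  simp_rw [Subgroup.mem_centralizer_singleton_iff] at h
  rw [← Fintype.card_subtype, ← Nat.card_eq_fintype_card, h, cycleType_stdMatching,
    Multiset.sum_replicate, Multiset.prod_replicate, Multiset.toFinset_replicate, Fintype.card_fin,
    smul_eq_mul, mul_comm m 2, Nat.sub_self, Nat.factorial_zero, one_mul]
  split_ifs with hm
  · simp [hm]
  · simp

def crossingParity (σ : Perm (Fin (2 * m))) : ℤ :=
  sign σ * ∏ j : Fin m, if σ (pairEquiv m (j, 0)) < σ (pairEquiv m (j, 1)) then 1 else -1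

theorem crossingParity_swap_mul {σ : Perm (Fin (2 * m))} {v : Fin (2 * m)}
    (hv : v ∈ (stdMatching m).mismatches σ) :
    crossingParity (swap v (stdMatching m v) * σ) = -crossingParity σ := by
  set ζ := stdMatching m
  set M := σ * ζ * σ⁻¹
  have hMv : M v ≠ ζ v := (mem_filter.1 hv).2
  have hM : Function.Involutive M := fun x => by simp [M, ζ, stdMatching_involutive _]
  have hfactor (j : Fin m) : (swap v (ζ v) * σ) (pairEquiv m (j, 0)) <
      (swap v (ζ v) * σ) (pairEquiv m (j, 1)) ↔
        σ (pairEquiv m (j, 0)) < σ (pairEquiv m (j, 1)) := by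
    have hpartner : σ (pairEquiv m (j, 1)) = M (σ (pairEquiv m (j, 0))) := by simp [M, ζ]
    rw [Perm.mul_apply, Perm.mul_apply, hpartner]
    have h₁ : ¬(σ (pairEquiv m (j, 0)) = v ∧ M (σ (pairEquiv m (j, 0))) = ζ v) :=
      fun ⟨ha, hb⟩ => hMv (ha ▸ hb)
    have h₂ : ¬(σ (pairEquiv m (j, 0)) = ζ v ∧ M (σ (pairEquiv m (j, 0))) = v) :=
      fun ⟨ha, hb⟩ => hMv (by rw [← ha, ← hb, hM])
    rcases covBy_stdMatching_or_covBy v with hc | hc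
    · exact swap_apply_lt_swap_apply_iff hc h₁ h₂
    · rw [swap_comm]; exact swap_apply_lt_swap_apply_iff hc h₂ h₁
  have hne : v ≠ ζ v := (stdMatching_apply_ne v).symm
  rw [crossingParity, crossingParity, Perm.sign_mul, sign_swap hne]
  simp only [hfactor]
  push_cast
  ring

def hyperoctahedral (x : Perm (Fin m) × (Fin m → Perm (Fin 2))) : Perm (Fin (2 * m)) :=
  (pairEquiv m).permCongr (prodCongrLeft (fun _ => x.1) * prodCongrRight x.2)

@[simp] theorem hyperoctahedral_pairEquiv (x : Perm (Fin m) × (Fin m → Perm (Fin 2)))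
    (y : Fin m × Fin 2) :
    hyperoctahedral x (pairEquiv m y) = pairEquiv m (x.1 y.1, x.2 y.1 y.2) := by
  simp [hyperoctahedral, permCongr_apply]; rfl

theorem sign_hyperoctahedral (x : Perm (Fin m) × (Fin m → Perm (Fin 2))) :
    sign (hyperoctahedral x) = ∏ j, sign (x.2 j) := by
  rw [hyperoctahedral, sign_permCongr, Perm.sign_mul, sign_prodCongrLeft, sign_prodCongrRight,
    Fin.prod_univ_two, Int.units_mul_self, one_mul]

theorem crossingParity_hyperoctahedral (x : Perm (Fin m) × (Fin m → Perm (Fin 2))) :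
    crossingParity (hyperoctahedral x) = 1 := by
  have hfin2 : ∀ g : Perm (Fin 2), (if g 0 < g 1 then (1 : ℤ) else -1) = sign g := by decide
  simp only [crossingParity, hyperoctahedral_pairEquiv, pairEquiv_lt_pairEquiv_iff, hfin2,
    sign_hyperoctahedral]
  rw [← Units.coe_prod, ← Units.val_mul, Int.units_mul_self, Units.val_one]

theorem hyperoctahedral_injective : Function.Injective (hyperoctahedral (m := m)) := by
  rintro ⟨π, ε⟩ ⟨π', ε'⟩ h
  have h' (j : Fin m) (b : Fin 2) : (π j, ε j b) = (π' j, ε' j b) :=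
    (pairEquiv m).injective (by simpa using congr($h (pairEquiv m (j, b))))
  simp only [Prod.mk.injEq] at h' ⊢
  exact ⟨Equiv.ext fun j => (h' j 0).1, funext fun j => Equiv.ext fun b => (h' j b).2⟩

theorem hyperoctahedral_mul_stdMatching (x : Perm (Fin m) × (Fin m → Perm (Fin 2))) :
    hyperoctahedral x * stdMatching m = stdMatching m * hyperoctahedral x := by
  have hfin2 : ∀ (g : Perm (Fin 2)) (b : Fin 2), g (swap 0 1 b) = swap 0 1 (g b) := by decide
  ext1 v
  obtain ⟨y, rfl⟩ := (pairEquiv m).surjective v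
  simp [hfin2]

theorem image_hyperoctahedral :
    univ.image hyperoctahedral =
      ({σ | σ * stdMatching m = stdMatching m * σ} : Finset (Perm (Fin (2 * m)))) := by
  refine eq_of_subset_of_card_le (fun σ hσ => ?_) ?_
  · obtain ⟨x, -, rfl⟩ := mem_image.1 hσ
    simpa using hyperoctahedral_mul_stdMatching x
  · rw [card_commute_stdMatching, card_image_of_injective _ hyperoctahedral_injective, card_univ]
    simp [Fintype.card_perm, mul_comm]

theorem crossingParity_eq_one_of_commute {σ : Perm (Fin (2 * m))}
    (hσ : σ * stdMatching m = stdMatching m * σ) : crossingParity σ = 1 := by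
  have : σ ∈ univ.image hyperoctahedral := by
    rw [image_hyperoctahedral]
    simpa using hσ
  obtain ⟨x, -, rfl⟩ := mem_image.1 this
  exact crossingParity_hyperoctahedral x

theorem sum_crossingParity : ∑ σ : Perm (Fin (2 * m)), crossingParity σ = 2 ^ m * (m ! : ℤ) := by
  rw [sum_eq_sum_filter_commute_of_swap_mul stdMatching_involutive _
      fun _ _ hv => crossingParity_swap_mul hv,
    sum_congr rfl fun σ hσ => crossingParity_eq_one_of_commute (mem_filter.1 hσ).2, sum_const,
    card_commute_stdMatching]
  simp

end CrossingParity

open CrossingParity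

/-- Indices are 0-based: the `j`-th factor compares the positions `2j` and `2j + 1`. -/
theorem sum_of_crossing_parities (m : ℕ) :
    ∑ σ : Equiv.Perm (Fin (2 * m)),
      (Equiv.Perm.sign σ : ℤ) *
        ∏ j : Fin m,
          (if σ ⟨2 * j.val, by have := j.isLt; omega⟩ <
              σ ⟨2 * j.val + 1, by have := j.isLt; omega⟩ then (1 : ℤ) else -1) =
      2 ^ m * (Nat.factorial m : ℤ) := by
  have h₀ (j : Fin m) : pairEquiv m (j, 0) = ⟨2 * j.val, by have := j.isLt; omega⟩ :=
    Fin.ext (by simp)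
  have h₁ (j : Fin m) : pairEquiv m (j, 1) = ⟨2 * j.val + 1, by have := j.isLt; omega⟩ :=
    Fin.ext (by simp)
  simpa only [crossingParity, h₀, h₁] using sum_crossingParity (m := m)
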